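/- arXiv:1105.4928 — 7 statements merged into one kernel-verified Lean document; each statement's English description precedes it below -/
import Mathlib

section
/- The function φ(t) = 1/(1 − e^{−t}) − 1/t is strictly increasing on (0, ∞). -/
/-!
Since `1 - e^{-t} = 2 e^{-t/2} sinh (t/2)`, the derivative of `φ` is `1/t² - 1/(2 sinh (t/2))²`,
which is positive because `sinh s > s` for `s > 0`.
-/

open Real

lemma one_sub_exp_neg_eq_mul_sinh (t : ℝ) :
    1 - exp (-t) = exp (-(t / 2)) * (2 * sinh (t / 2)) := by
  rw [sinh_eq, mul_div_cancel₀ _ two_ne_zero, mul_sub, ← exp_add, ← exp_add]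
  ring_nf
  rw [exp_zero]
  ring

lemma exp_neg_div_one_sub_exp_neg_sq (t : ℝ) :
    exp (-t) / (1 - exp (-t)) ^ 2 = 1 / (2 * sinh (t / 2)) ^ 2 := by
  have h : exp (-(t / 2)) ^ 2 = exp (-t) := by rw [← exp_nat_mul]; ring_nf
  rw [one_sub_exp_neg_eq_mul_sinh, mul_pow, h, ← div_div, div_self (exp_pos _).ne']

lemma one_sub_exp_neg_pos {t : ℝ} (ht : 0 < t) : 0 < 1 - exp (-t) :=
  sub_pos.2 (exp_lt_one_iff.2 (neg_lt_zero.2 ht))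

lemma hasDerivAt_inv_one_sub_exp_neg_sub_inv {t : ℝ} (ht : 0 < t) :
    HasDerivAt (fun t : ℝ => 1 / (1 - exp (-t)) - 1 / t)
      (1 / t ^ 2 - exp (-t) / (1 - exp (-t)) ^ 2) t := by
  have hden : HasDerivAt (fun t : ℝ => 1 - exp (-t)) (exp (-t)) t := by
    simpa using ((hasDerivAt_exp (-t)).comp t (hasDerivAt_neg t)).const_sub 1
  simp only [one_div]
  exact ((hden.fun_inv (one_sub_exp_neg_pos ht).ne').fun_sub (hasDerivAt_inv ht.ne')).congr_deriv
    (by ring)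

lemma one_div_two_mul_sinh_half_sq_lt_one_div_sq {t : ℝ} (ht : 0 < t) :
    1 / (2 * sinh (t / 2)) ^ 2 < 1 / t ^ 2 := by
  have h : t < 2 * sinh (t / 2) := by linarith [self_lt_sinh_iff.2 (half_pos ht)]
  gcongr

theorem phi_strictMonoOn :
    StrictMonoOn (fun t : ℝ => 1 / (1 - Real.exp (-t)) - 1 / t) (Set.Ioi 0) := by
  refine strictMonoOn_of_hasDerivWithinAt_pos (convex_Ioi 0)
    (f' := fun t => 1 / t ^ 2 - exp (-t) / (1 - exp (-t)) ^ 2) ?_ ?_ ?_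
  · exact fun t ht => (hasDerivAt_inv_one_sub_exp_neg_sub_inv ht).continuousAt.continuousWithinAt
  · rw [interior_Ioi]
    exact fun t ht => (hasDerivAt_inv_one_sub_exp_neg_sub_inv ht).hasDerivWithinAt
  · rw [interior_Ioi]
    intro t ht
    rw [sub_pos, exp_neg_div_one_sub_exp_neg_sq]
    exact one_div_two_mul_sinh_half_sq_lt_one_div_sq ht
end

section
/- For all t > 0, 1/2 < φ(t) < 1, where φ(t) = 1/(1 − e^{−t}) − 1/t. -/
/-!
With `u = exp t`, the function equals `u / (u - 1) - 1 / t`. The upper bound is `t < u - 1`.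
The lower bound amounts to `0 < (t - 2) u + t + 2`, i.e. `tanh (t / 2) < t / 2`; the right side
vanishes at `t = 0` and has derivative `(t - 1) u + 1 > 0`, which is `1 - t < exp (-t)` again.
-/

open Real

lemma one_sub_mul_exp_lt_one {x : ℝ} (hx : x ≠ 0) : (1 - x) * exp x < 1 := by
  have h := add_one_lt_exp (neg_ne_zero.mpr hx)
  calc (1 - x) * exp x < exp (-x) * exp x := by gcongr; linarith
    _ = 1 := by rw [← exp_add, neg_add_cancel, exp_zero]

lemma sub_two_mul_exp_add_add_two_pos {t : ℝ} (ht : 0 < t) : 0 < (t - 2) * exp t + t + 2 := by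
  let g : ℝ → ℝ := fun x ↦ (x - 2) * exp x + x + 2
  have hderiv (x : ℝ) : HasDerivAt g ((x - 1) * exp x + 1) x := by
    refine (((((hasDerivAt_id' x).sub_const 2).mul (hasDerivAt_exp x)).add
      (hasDerivAt_id' x)).add_const 2).congr_deriv ?_
    ring
  have hmono : StrictMonoOn g (Set.Ici 0) := by
    refine strictMonoOn_of_deriv_pos (convex_Ici 0)
      (fun x _ ↦ (hderiv x).continuousAt.continuousWithinAt) fun x hx ↦ ?_
    rw [interior_Ici] at hx
    rw [(hderiv x).deriv]
    linarith [one_sub_mul_exp_lt_one (ne_of_gt hx)]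
  simpa [g] using hmono Set.self_mem_Ici ht.le ht

lemma one_div_one_sub_exp_neg {t : ℝ} (ht : t ≠ 0) :
    1 / (1 - exp (-t)) = exp t / (exp t - 1) := by
  have : exp t - 1 ≠ 0 := sub_ne_zero.mpr ((exp_eq_one_iff t).not.mpr ht)
  rw [exp_neg]
  field_simp

theorem phi_bounds (t : ℝ) (ht : 0 < t) :
    1 / 2 < 1 / (1 - Real.exp (-t)) - 1 / t ∧
      1 / (1 - Real.exp (-t)) - 1 / t < 1 := by
  have hu : 0 < exp t - 1 := by linarith [add_one_lt_exp ht.ne']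
  rw [one_div_one_sub_exp_neg ht.ne', div_sub_div _ _ hu.ne' ht.ne']
  constructor
  · rw [lt_div_iff₀ (by positivity)]
    linarith [sub_two_mul_exp_add_add_two_pos ht]
  · rw [div_lt_one (by positivity)]
    linarith [add_one_lt_exp ht.ne']
end

section
/- For x > 0 and p a positive integer, x [ln(px/(x+p+1)) − ψ_p(x)] = x ∫_0^∞ (1 − e^{−(p+1)t}) φ(t) e^{−xt} dt, where φ(t) = 1/(1 − e^{−t}) − 1/t. -/
/-! On `(0, ∞)` the finite geometric sum `(1 - e^{-(p+1)t}) / (1 - e^{-t}) = ∑_{k ≤ p} e^{-kt}`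
turns the integrand into `∑_{k ≤ p} e^{-(x+k)t} - (e^{-xt} - e^{-(x+p+1)t}) / t`. The first part
integrates to `∑_{k ≤ p} 1/(x+k)`, the second is a Frullani integral equal to
`log ((x+p+1)/x)`, and these are exactly the two pieces of `log (p x/(x+p+1)) - ψ_p(x)`. -/

open Real Finset MeasureTheory

noncomputable def pPsi (p : ℕ) (x : ℝ) : ℝ :=
  Real.log p - ∑ k ∈ Finset.range (p + 1), 1 / (x + k)

open Set Filter Topology

theorem integral_exp_neg_mul_Ioi {c : ℝ} (hc : 0 < c) :
    ∫ t in Ioi 0, exp (-c * t) = 1 / c := by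
  rw [integral_exp_mul_Ioi (neg_neg_iff_pos.2 hc)]
  simp

theorem abs_exp_neg_sub_exp_neg_div_le {a b t : ℝ} (hab : a ≤ b) (ht : 0 < t) :
    |(exp (-a * t) - exp (-b * t)) / t| ≤ (b - a) * exp (-a * t) := by
  have hsplit : exp (-b * t) = exp (-a * t) * exp (-((b - a) * t)) := by
    rw [← exp_add]; ring_nf
  have hle_one : exp (-((b - a) * t)) ≤ 1 :=
    exp_le_one_iff.2 (neg_nonpos.2 (mul_nonneg (sub_nonneg.2 hab) ht.le))
  have hlin := one_sub_le_exp_neg ((b - a) * t)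
  have hpos := exp_pos (-a * t)
  rw [abs_of_nonneg (div_nonneg (by nlinarith) ht.le), div_le_iff₀ ht]
  nlinarith

theorem integrableOn_exp_neg_sub_exp_neg_div_Ioi {a b : ℝ} (ha : 0 < a) (hb : 0 < b) :
    IntegrableOn (fun t ↦ (exp (-a * t) - exp (-b * t)) / t) (Ioi 0) := by
  wlog hab : a ≤ b generalizing a b
  · convert (this hb ha (le_of_not_ge hab)).neg using 2 with t
    simp only [Pi.neg_apply, ← neg_div, neg_sub]
  have hmeas : AEStronglyMeasurable (fun t ↦ (exp (-a * t) - exp (-b * t)) / t)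
      (volume.restrict (Ioi 0)) :=
    (ContinuousOn.div (by fun_prop) continuousOn_id fun t ht ↦ ht.ne').aestronglyMeasurable
      measurableSet_Ioi
  refine ((exp_neg_integrableOn_Ioi 0 ha).const_mul (b - a)).mono' hmeas ?_
  filter_upwards [ae_restrict_mem measurableSet_Ioi] with t ht
  exact abs_exp_neg_sub_exp_neg_div_le hab ht

theorem integral_exp_neg_sub_exp_neg_div_Ioi {a b : ℝ} (ha : 0 < a) (hb : 0 < b) :
    ∫ t in Ioi 0, (exp (-a * t) - exp (-b * t)) / t = log (b / a) := by
  set f : ℝ → ℝ := fun s ↦ exp (-s) with hf_def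
  have hf : Continuous f := by fun_prop
  have hform : (fun t ↦ (exp (-a * t) - exp (-b * t)) / t)
      = fun t ↦ t⁻¹ • (f (a * t) - f (b * t)) := by
    ext t; simp only [hf_def, smul_eq_mul, neg_mul]; ring
  have hzero : Tendsto f (𝓝[>] 0) (𝓝 1) := by
    simpa [hf_def] using (hf.tendsto 0).mono_left nhdsWithin_le_nhds
  rw [hform, Frullani.integral_Ioi_eq (hf.locallyIntegrable.locallyIntegrableOn _) ha hb hzero
    tendsto_exp_neg_atTop_nhds_zero (hform ▸ integrableOn_exp_neg_sub_exp_neg_div_Ioi ha hb)]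
  simp

theorem sum_range_exp_neg_add_mul (n : ℕ) (x : ℝ) {t : ℝ} (ht : t ≠ 0) :
    ∑ k ∈ range n, exp (-(x + k) * t) = (1 - exp (-n * t)) / (1 - exp (-t)) * exp (-x * t) := by
  have hu : 1 - exp (-t) ≠ 0 := by
    rw [sub_ne_zero, ne_comm, Ne, exp_eq_one_iff, neg_eq_zero]
    exact ht
  have hpow (m : ℕ) : exp (-m * t) = exp (-t) ^ m := by rw [← exp_nat_mul]; ring_nf
  have hterm (k : ℕ) : exp (-(x + k) * t) = exp (-t) ^ k * exp (-x * t) := by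
    rw [← hpow, ← exp_add]; ring_nf
  rw [hpow, ← geom_sum_mul_neg, mul_div_cancel_right₀ _ hu, sum_mul]
  exact sum_congr rfl fun k _ ↦ hterm k

theorem theta_integrand_eq (n : ℕ) (x : ℝ) {t : ℝ} (ht : t ≠ 0) :
    (1 - exp (-n * t)) * (1 / (1 - exp (-t)) - 1 / t) * exp (-x * t)
      = ∑ k ∈ range n, exp (-(x + k) * t) - (exp (-x * t) - exp (-(x + n) * t)) / t := by
  have hsplit : exp (-(x + n) * t) = exp (-n * t) * exp (-x * t) := by rw [← exp_add]; ring_nf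
  rw [sum_range_exp_neg_add_mul n x ht, hsplit]
  ring

theorem theta_integral_rep (p : ℕ) (hp : 1 ≤ p) (x : ℝ) (hx : 0 < x) :
    x * (Real.log ((p : ℝ) * x / (x + p + 1)) - pPsi p x)
      = x * ∫ t in Set.Ioi (0 : ℝ),
          (1 - Real.exp (-((p : ℝ) + 1) * t)) *
            (1 / (1 - Real.exp (-t)) - 1 / t) * Real.exp (-x * t) := by
  have hxk (k : ℕ) : 0 < x + k := by positivity
  have hsum : ∀ k ∈ range (p + 1), IntegrableOn (fun t ↦ exp (-(x + k) * t)) (Ioi 0) :=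
    fun k _ ↦ exp_neg_integrableOn_Ioi 0 (hxk k)
  have hkernel : EqOn (fun t ↦ (1 - exp (-((p : ℝ) + 1) * t)) *
        (1 / (1 - exp (-t)) - 1 / t) * exp (-x * t))
      (fun t ↦ ∑ k ∈ range (p + 1), exp (-(x + k) * t)
        - (exp (-x * t) - exp (-(x + p + 1) * t)) / t) (Ioi 0) := fun t ht ↦ by
    simpa [add_assoc] using theta_integrand_eq (p + 1) x (ne_of_gt ht)
  rw [setIntegral_congr_fun measurableSet_Ioi hkernel, integral_sub (integrable_finsetSum _ hsum)
    (integrableOn_exp_neg_sub_exp_neg_div_Ioi hx (by positivity)), integral_finsetSum _ hsum,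
    integral_exp_neg_sub_exp_neg_div_Ioi hx (by positivity)]
  simp_rw [integral_exp_neg_mul_Ioi (hxk _)]
  rw [pPsi, log_div (by positivity) (by positivity), log_div (by positivity) hx.ne',
    log_mul (Nat.cast_ne_zero.2 (by omega)) hx.ne']
  ring
end

section
/- For each positive integer p, the function θ_{p,1}(x) = x [ln(px/(x+p+1)) − ψ_p(x)] is completely monotonic on (0, ∞). -/
open Real Finset

def CompletelyMonotonicOn (f : ℝ → ℝ) : Prop :=
  ContDiffOn ℝ (⊤ : ℕ∞) f (Set.Ioi 0) ∧
    ∀ n : ℕ, ∀ x ∈ Set.Ioi (0 : ℝ),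
      0 ≤ (-1 : ℝ) ^ n * iteratedDerivWithin n f (Set.Ioi 0) x

namespace ThetaAux

open Set Filter MeasureTheory Topology Nat

lemma hda {f : ℝ → ℝ} {f' x : ℝ} (h : HasDerivAt f f' x) : HasDerivAt f f' x := h

lemma nonneg_on_Ici {g g' : ℝ → ℝ} (hd : ∀ t, HasDerivAt g (g' t) t) (h0 : 0 ≤ g 0)
    (h' : ∀ t, 0 ≤ t → 0 ≤ g' t) {t : ℝ} (ht : 0 ≤ t) : 0 ≤ g t := by
  have hm : MonotoneOn g (Set.Ici 0) := by
    apply monotoneOn_of_deriv_nonneg (convex_Ici 0)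
      (fun s _ => (hd s).continuousAt.continuousWithinAt)
      (fun s _ => (hd s).differentiableAt.differentiableWithinAt)
    intro s hs
    rw [interior_Ici] at hs
    rw [(hd s).deriv]
    exact h' s (le_of_lt hs)
  exact h0.trans (hm (self_mem_Ici) ht ht)

lemma hasDerivAt_exp_neg (t : ℝ) : HasDerivAt (fun t : ℝ => exp (-t)) (-exp (-t)) t := by
  simpa using ((hasDerivAt_id t).neg).exp

lemma exp_neg_le_quad {t : ℝ} (ht : 0 ≤ t) : exp (-t) ≤ 1 - t + t ^ 2 / 2 := by
  have key := nonneg_on_Ici (g := fun t => 1 - t + t ^ 2 / 2 - exp (-t))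
    (g' := fun t => -1 + t + exp (-t)) (fun t => by
      have h := (((hasDerivAt_const t (1:ℝ)).fun_sub (hasDerivAt_id t)).fun_add
        ((hasDerivAt_pow 2 t).div_const 2)).fun_sub (hasDerivAt_exp_neg t)
      exact h.congr_deriv (by norm_num))
    (by norm_num) (fun t ht => by
      have := add_one_le_exp (-t)
      linarith) ht
  linarith

lemma one_sub_exp_le (t : ℝ) : 1 - exp (-t) ≤ t := by
  have := add_one_le_exp (-t); linarith

lemma exp_sub_exp_neg {t : ℝ} (ht : 0 ≤ t) : 2 * t ≤ exp t - exp (-t) := by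
  have key := nonneg_on_Ici (g := fun t => exp t - exp (-t) - 2 * t)
    (g' := fun t => exp t + exp (-t) - 2) (fun t => by
      have h := ((Real.hasDerivAt_exp t).fun_sub (hasDerivAt_exp_neg t)).fun_sub
        ((hasDerivAt_id t).const_mul 2)
      exact h.congr_deriv (by ring))
    (by norm_num) (fun t _ => by
      have h1 : exp t * exp (-t) = 1 := by rw [← exp_add]; simp
      have h2 := exp_pos t
      nlinarith [sq_nonneg (exp t - 1)]) ht
  linarith

lemma cosh_ge {t : ℝ} (ht : 0 ≤ t) : 2 + t ^ 2 ≤ exp t + exp (-t) := by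
  have key := nonneg_on_Ici (g := fun t => exp t + exp (-t) - 2 - t ^ 2)
    (g' := fun t => exp t - exp (-t) - 2 * t) (fun t => by
      have h := (((Real.hasDerivAt_exp t).fun_add (hasDerivAt_exp_neg t)).fun_sub
        (hasDerivAt_const t (2:ℝ))).fun_sub (hasDerivAt_pow 2 t)
      convert hda h using 1
      norm_num; ring)
    (by norm_num) (fun t ht => by
      have := exp_sub_exp_neg ht
      linarith) ht
  linarith

lemma W_nonneg {t : ℝ} (ht : 0 ≤ t) : (1 - exp (-t)) ^ 2 * (1 + t) ≤ t ^ 2 := by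
  have hW'' : ∀ s : ℝ, 0 ≤ s →
      (0:ℝ) ≤ 2 - 2 * (2 * exp (-s) ^ 2 - exp (-s)) * (1 + s) - 4 * (1 - exp (-s)) * exp (-s) := by
    intro s hs
    have hz0 : 0 < exp (-s) := exp_pos _
    have hz1 : exp (-s) ≤ 1 := exp_le_one_iff.mpr (by linarith)
    set z := exp (-s) with hz
    rcases le_or_gt z (1/2) with hcase | hcase
    · nlinarith [mul_nonneg (mul_nonneg hz0.le hs) (by linarith : (0:ℝ) ≤ 1 - 2*z)]
    · have hs1 : s ≤ 1 := by
        by_contra hgt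
        push_neg at hgt
        have h2 : exp (-s) ≤ exp (-1) := exp_le_exp.mpr (by linarith)
        have h3 : exp (-1) < 1/2 := by
          rw [exp_neg, inv_lt_comm₀ (exp_pos 1) (by norm_num)]
          have := add_one_lt_exp (x := 1) one_ne_zero
          linarith
        rw [← hz] at h2
        linarith
      have hwl : s - s^2/2 ≤ 1 - z := by
        have := exp_neg_le_quad hs; rw [← hz] at this; linarith
      have hwu : 1 - z ≤ s := by have := one_sub_exp_le s; rw [← hz] at this; linarith
      have hinner : (0:ℝ) ≤ 1 + 3*s - 2*(1-z)*s := by nlinarith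
      have h1 : (0:ℝ) ≤ ((1-z) - (s - s^2/2)) * (1 + 3*s - 2*(1-z)*s) :=
        mul_nonneg (by linarith) hinner
      have h2 : (0:ℝ) ≤ (s - s^2/2) * (2*s*(s - (1-z))) :=
        mul_nonneg (by nlinarith) (by nlinarith)
      have h3 : (0:ℝ) ≤ s^2*(1-s)*(5/2-s) :=
        mul_nonneg (mul_nonneg (sq_nonneg s) (by linarith)) (by linarith)
      nlinarith [h1, h2, h3]
  have hd1 : ∀ s : ℝ, HasDerivAt (fun u : ℝ => 2*u - 2*(1 - exp (-u))*exp (-u)*(1+u) - (1 - exp (-u))^2)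
      (2 - 2 * (2 * exp (-s) ^ 2 - exp (-s)) * (1 + s) - 4 * (1 - exp (-s)) * exp (-s)) s := by
    intro s
    have hz := hasDerivAt_exp_neg s
    have h1 : HasDerivAt (fun u : ℝ => 1 - exp (-u)) (exp (-s)) s := by
      simpa using hda ((hasDerivAt_const s (1:ℝ)).fun_sub hz)
    have h := ((hasDerivAt_id' (𝕜 := ℝ) s).const_mul 2).fun_sub
      ((((h1.fun_mul hz).fun_mul ((hasDerivAt_const s (1:ℝ)).fun_add (hasDerivAt_id' s))).const_mul 2).fun_add
      (h1.fun_pow 2))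
    convert hda h using 1
    · funext u; ring
    · push_cast; ring
  have hd0 : ∀ s : ℝ, HasDerivAt (fun u : ℝ => u^2 - (1 - exp (-u))^2*(1+u))
      (2*s - 2*(1 - exp (-s))*exp (-s)*(1+s) - (1 - exp (-s))^2) s := by
    intro s
    have hz := hasDerivAt_exp_neg s
    have h1 : HasDerivAt (fun u : ℝ => 1 - exp (-u)) (exp (-s)) s := by
      simpa using hda ((hasDerivAt_const s (1:ℝ)).fun_sub hz)
    have h := (hasDerivAt_pow 2 s).fun_sub
      ((h1.fun_pow 2).fun_mul ((hasDerivAt_const s (1:ℝ)).fun_add (hasDerivAt_id' s)))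
    convert hda h using 1
    · push_cast; ring
  have hW' : ∀ s : ℝ, 0 ≤ s → 0 ≤ 2*s - 2*(1 - exp (-s))*exp (-s)*(1+s) - (1 - exp (-s))^2 :=
    fun s hs => by
      simpa using nonneg_on_Ici hd1 (by norm_num) (fun u hu => hW'' u hu) hs
  have hW : (0:ℝ) ≤ t^2 - (1-exp (-t))^2*(1+t) := by
    simpa using nonneg_on_Ici hd0 (by norm_num) (fun u hu => by simpa using hW' u hu) ht
  linarith

noncomputable def Kf (p : ℕ) (t : ℝ) : ℝ :=
  1 - exp (-(((p:ℝ)+1)*t)) - ((p:ℝ)+1)*t*exp (-(((p:ℝ)+1)*t))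
    - t^2 * ∑ k ∈ Finset.range (p+1), (k:ℝ)*exp (-((k:ℝ)*t))

lemma sum_sq_mul (p : ℕ) (z : ℝ) :
    (1-z)^2 * ∑ k ∈ Finset.range (p+1), (k:ℝ)*z^k
      = z - ((p:ℝ)+1)*z^(p+1) + (p:ℝ)*z^(p+2) := by
  induction p with
  | zero => simp
  | succ n ih =>
    rw [Finset.sum_range_succ, mul_add, ih]
    push_cast
    ring

lemma K_nonneg (p : ℕ) {t : ℝ} (ht : 0 < t) : 0 ≤ Kf p t := by
  have hz0 : 0 < exp (-t) := exp_pos _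
  have hz1 : exp (-t) < 1 := by
    rw [← Real.exp_zero]; exact Real.exp_lt_exp.mpr (by linarith)
  set z := exp (-t) with hz
  have hzk : ∀ k : ℕ, exp (-((k:ℝ)*t)) = z^k := fun k => by
    rw [show -((k:ℝ)*t) = (k:ℝ)*(-t) by ring, Real.exp_nat_mul, hz]
  have hzc : exp (-(((p:ℝ)+1)*t)) = z^(p+1) := by
    have := hzk (p+1); push_cast at this; exact this
  have hK : Kf p t = 1 - z^(p+1) - ((p:ℝ)+1)*t*z^(p+1)
      - t^2 * ∑ k ∈ Finset.range (p+1), (k:ℝ)*z^k := by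
    unfold Kf
    rw [hzc]
    congr 2
    exact Finset.sum_congr rfl fun k _ => by rw [hzk k]
  have hexp : exp t = z⁻¹ := by
    rw [hz, ← Real.exp_neg]; ring_nf
  have h1 : 0 ≤ (1-z)^2 - t^2*z := by
    have hc := cosh_ge ht.le
    rw [hexp] at hc
    have : z * z⁻¹ = 1 := mul_inv_cancel₀ hz0.ne'
    nlinarith
  have hB : 0 ≤ t^2*(((p:ℝ)+1) - (p:ℝ)*z) - (1-z)^2*(1+((p:ℝ)+1)*t) := by
    have hW := W_nonneg ht.le
    rw [← hz] at hW
    have h2 : 1 - z ≤ t := by have := one_sub_exp_le t; rw [← hz] at this; exact this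
    have hp0 : (0:ℝ) ≤ p := Nat.cast_nonneg p
    nlinarith [mul_nonneg hp0 (mul_nonneg (mul_nonneg ht.le (by linarith : (0:ℝ) ≤ 1-z))
      (by linarith : (0:ℝ) ≤ t-(1-z)))]
  have hphi : 0 ≤ (1-z)^2 * Kf p t := by
    rw [hK]
    have hexpand : (1-z)^2 * (1 - z^(p+1) - ((p:ℝ)+1)*t*z^(p+1)
        - t^2 * ∑ k ∈ Finset.range (p+1), (k:ℝ)*z^k)
        = ((1-z)^2 - t^2*z) + z^(p+1) * (t^2*(((p:ℝ)+1) - (p:ℝ)*z)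
            - (1-z)^2*(1+((p:ℝ)+1)*t)) := by
      linear_combination (-(t^2)) * (sum_sq_mul p z)
    rw [hexpand]
    exact add_nonneg h1 (mul_nonneg (pow_nonneg hz0.le _) hB)
  have hzz : 0 < (1-z)^2 := pow_pos (by linarith) 2
  exact (mul_nonneg_iff_of_pos_left hzz).mp hphi

lemma gammaIntegrable (n : ℕ) {r : ℝ} (hr : 0 < r) :
    IntegrableOn (fun t : ℝ => t^n * exp (-(r*t))) (Ioi 0) := by
  apply integrable_of_isBigO_exp_neg (half_pos hr)
  · exact ((continuous_pow n).mul
      (continuous_exp.comp (continuous_const.mul continuous_id').neg)).continuousOn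
  · have h0 : Tendsto (fun t : ℝ => t^n * exp (-(r/2*t))) atTop (𝓝 0) := by
      have := tendsto_rpow_mul_exp_neg_mul_atTop_nhds_zero (n:ℝ) (r/2) (half_pos hr)
      refine this.congr' ?_
      filter_upwards [eventually_gt_atTop 0] with t ht
      rw [Real.rpow_natCast]
      ring_nf
    apply Asymptotics.IsBigO.of_bound 1
    filter_upwards [h0.eventually (eventually_le_nhds (by norm_num : (0:ℝ) < 1)),
      eventually_ge_atTop (0:ℝ)] with t hle ht0
    have hnm : -(r/2)*t = -(r/2*t) := by ring
    have hsplit : exp (-(r*t)) = exp (-(r/2*t)) * exp (-(r/2*t)) := by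
      rw [← exp_add]; ring_nf
    rw [Real.norm_eq_abs, Real.norm_eq_abs, abs_of_nonneg (by positivity),
      abs_of_nonneg (exp_pos _).le, hsplit, one_mul, ← mul_assoc, hnm]
    exact mul_le_of_le_one_left (exp_pos _).le hle

lemma tendsto_exp_neg_mul {r : ℝ} (hr : 0 < r) :
    Tendsto (fun u : ℝ => exp (-(r*u))) atTop (𝓝 0) := by
  have h1 : Tendsto (fun u : ℝ => r * u) atTop atTop := tendsto_id.const_mul_atTop hr
  exact tendsto_exp_neg_atTop_nhds_zero.comp h1

lemma tendsto_pow_mul_exp_neg_mul (n : ℕ) {r : ℝ} (hr : 0 < r) :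
    Tendsto (fun u : ℝ => u^n * exp (-(r*u))) atTop (𝓝 0) := by
  have := tendsto_rpow_mul_exp_neg_mul_atTop_nhds_zero (n:ℝ) r hr
  refine this.congr' ?_
  filter_upwards [eventually_gt_atTop 0] with t ht
  rw [Real.rpow_natCast]
  ring_nf

lemma gamma_int {r : ℝ} (hr : 0 < r) :
    ∀ n : ℕ, ∫ t in Ioi (0:ℝ), t^n * exp (-(r*t)) = (n ! : ℝ) / r^(n+1) := by
  intro n
  induction n with
  | zero =>
    have hd : ∀ t : ℝ, t ∈ Ici (0:ℝ) → HasDerivAt (fun u : ℝ => -exp (-(r*u))/r)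
        ((fun u : ℝ => u^0 * exp (-(r*u))) t) t := by
      intro t _
      have h := (((hasDerivAt_id' (𝕜 := ℝ) t).const_mul r).fun_neg.exp).fun_neg.div_const r
      convert hda h using 1
      field_simp
    have htend : Tendsto (fun u : ℝ => -exp (-(r*u))/r) atTop (𝓝 0) := by
      have := ((tendsto_exp_neg_mul hr).neg).div_const r
      simpa using this
    have := integral_Ioi_of_hasDerivAt_of_tendsto' hd (gammaIntegrable 0 hr) htend
    rw [this]
    field_simp
    simp
  | succ n ih =>
    -- FTC for t^{n+1} e^{-rt}
    have hd : ∀ t : ℝ, t ∈ Ici (0:ℝ) → HasDerivAt (fun u : ℝ => u^(n+1) * exp (-(r*u)))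
        ((fun u : ℝ => ((n:ℝ)+1) * (u^n * exp (-(r*u))) - r * (u^(n+1) * exp (-(r*u)))) t) t := by
      intro t _
      have h := (hasDerivAt_pow (n+1) t).fun_mul (((hasDerivAt_id' (𝕜 := ℝ) t).const_mul r).fun_neg.exp)
      convert hda h using 1
      push_cast
      ring
    have hint : IntegrableOn (fun u : ℝ =>
        ((n:ℝ)+1) * (u^n * exp (-(r*u))) - r * (u^(n+1) * exp (-(r*u)))) (Ioi 0) :=
      ((gammaIntegrable n hr).const_mul _).sub ((gammaIntegrable (n+1) hr).const_mul _)
    have htend : Tendsto (fun u : ℝ => u^(n+1) * exp (-(r*u))) atTop (𝓝 0) :=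
      tendsto_pow_mul_exp_neg_mul (n+1) hr
    have key := integral_Ioi_of_hasDerivAt_of_tendsto' hd hint htend
    rw [integral_sub ((gammaIntegrable n hr).const_mul _) ((gammaIntegrable (n+1) hr).const_mul _),
      integral_const_mul, integral_const_mul, ih] at key
    simp only [zero_pow (Nat.succ_ne_zero n), zero_mul, sub_zero, exp_zero] at key
    -- key : (n+1) * (n!/r^(n+1)) - r * ∫ t^(n+1) e^{-rt} = 0 - 0
    have h2 : r * ∫ t in Ioi (0:ℝ), t^(n+1) * exp (-(r*t)) = ((n:ℝ)+1) * ((n ! : ℝ)/r^(n+1)) := by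
      linarith
    rw [Nat.factorial_succ]
    push_cast
    field_simp at h2 ⊢
    linear_combination h2

noncomputable def Gf (p m : ℕ) (x : ℝ) : ℝ :=
  1/x^m - 1/(x+((p:ℝ)+1))^m - (m:ℝ)*((p:ℝ)+1)/(x+((p:ℝ)+1))^(m+1)
    - (m:ℝ)*((m:ℝ)+1) * ∑ k ∈ Finset.range (p+1), (k:ℝ)/(x+(k:ℝ))^(m+2)

lemma Gf_repr (p q : ℕ) {x : ℝ} (hx : 0 < x) :
    ∫ t in Ioi (0:ℝ), t^q * exp (-(x*t)) * Kf p t = (q ! : ℝ) * Gf p (q+1) x := by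
  have hxc : (0:ℝ) < x + (((p:ℝ))+1) := by positivity
  have hxk : ∀ k : ℕ, (0:ℝ) < x + (k:ℝ) := fun k => by positivity
  have I1 := gammaIntegrable q hx
  have I2 := gammaIntegrable q hxc
  have I3 : IntegrableOn (fun t : ℝ =>
      ((p:ℝ)+1) * (t^(q+1)*exp (-((x+((p:ℝ)+1))*t)))) (Ioi 0) :=
    (gammaIntegrable (q+1) hxc).const_mul _
  have I4 : IntegrableOn (fun t : ℝ =>
      ∑ k ∈ Finset.range (p+1), (k:ℝ)*(t^(q+2)*exp (-((x+(k:ℝ))*t)))) (Ioi 0) := by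
    apply integrable_finset_sum
    intro k _
    exact (gammaIntegrable (q+2) (hxk k)).const_mul _
  have I34 : IntegrableOn (fun t : ℝ =>
      (((p:ℝ)+1) * (t^(q+1)*exp (-((x+((p:ℝ)+1))*t))))
        + ∑ k ∈ Finset.range (p+1), (k:ℝ)*(t^(q+2)*exp (-((x+(k:ℝ))*t)))) (Ioi 0) := I3.add I4
  have I234 : IntegrableOn (fun t : ℝ =>
      (t^q*exp (-((x+((p:ℝ)+1))*t)))
        + ((((p:ℝ)+1) * (t^(q+1)*exp (-((x+((p:ℝ)+1))*t))))
          + ∑ k ∈ Finset.range (p+1), (k:ℝ)*(t^(q+2)*exp (-((x+(k:ℝ))*t))))) (Ioi 0) :=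
    I2.add I34
  have hident : (fun t : ℝ => t^q * exp (-(x*t)) * Kf p t)
      = fun t : ℝ => (t^q*exp (-(x*t)))
        - ((t^q*exp (-((x+((p:ℝ)+1))*t)))
          + ((((p:ℝ)+1) * (t^(q+1)*exp (-((x+((p:ℝ)+1))*t))))
            + ∑ k ∈ Finset.range (p+1), (k:ℝ)*(t^(q+2)*exp (-((x+(k:ℝ))*t))))) := by
    funext t
    unfold Kf
    have hsum : t^q * exp (-(x*t)) * (t^2 * ∑ k ∈ Finset.range (p+1), (k:ℝ)*exp (-((k:ℝ)*t)))
        = ∑ k ∈ Finset.range (p+1), (k:ℝ)*(t^(q+2)*exp (-((x+(k:ℝ))*t))) := by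
      rw [Finset.mul_sum, Finset.mul_sum]
      apply Finset.sum_congr rfl
      intro k _
      rw [show exp (-((x+(k:ℝ))*t)) = exp (-(x*t)) * exp (-((k:ℝ)*t)) by
        rw [← exp_add]; ring_nf]
      ring
    have hE : exp (-((x+((p:ℝ)+1))*t)) = exp (-(x*t)) * exp (-((((p:ℝ))+1)*t)) := by
      rw [← exp_add]; ring_nf
    rw [hE, ← hsum]
    ring
  rw [hident, integral_sub I1 I234, integral_add I2 I34, integral_add I3 I4,
    integral_const_mul, integral_finset_sum _
      (fun k _ => (gammaIntegrable (q+2) (hxk k)).const_mul _)]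
  rw [gamma_int hx q, gamma_int hxc q, gamma_int hxc (q+1)]
  have hsumval : ∑ k ∈ Finset.range (p+1),
      (∫ t in Ioi (0:ℝ), (k:ℝ)*(t^(q+2)*exp (-((x+(k:ℝ))*t))))
      = (((q:ℝ)+2) * (((q:ℝ)+1) * (q ! : ℝ))) * ∑ k ∈ Finset.range (p+1), (k:ℝ)/(x+(k:ℝ))^(q+3) := by
    rw [Finset.mul_sum]
    apply Finset.sum_congr rfl
    intro k _
    rw [integral_const_mul, gamma_int (hxk k) (q+2)]
    have hf2 : ((q+2)! : ℝ) = ((q:ℝ)+2) * (((q:ℝ)+1) * (q ! : ℝ)) := by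
      rw [show q+2 = (q+1)+1 from rfl, Nat.factorial_succ, Nat.factorial_succ]
      push_cast
      ring
    rw [hf2]
    ring
  rw [hsumval]
  unfold Gf
  have hf1 : ((q+1)! : ℝ) = ((q:ℝ)+1) * (q ! : ℝ) := by
    rw [Nat.factorial_succ]; push_cast; ring
  rw [hf1]
  simp only [show q+1+1 = q+2 from rfl, show q+1+2 = q+3 from rfl]
  push_cast
  ring

lemma G_nonneg (p q : ℕ) {x : ℝ} (hx : 0 < x) : 0 ≤ Gf p (q+1) x := by
  have hint : 0 ≤ ∫ t in Ioi (0:ℝ), t^q * exp (-(x*t)) * Kf p t := by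
    apply setIntegral_nonneg measurableSet_Ioi
    intro t ht
    exact mul_nonneg (mul_nonneg (pow_nonneg (le_of_lt ht) q) (exp_pos _).le)
      (K_nonneg p ht)
  rw [Gf_repr p q hx] at hint
  have hq : (0:ℝ) < (q ! : ℝ) := by
    exact_mod_cast Nat.factorial_pos q
  exact (mul_nonneg_iff_of_pos_left hq).mp hint

noncomputable def f0 (p : ℕ) (x : ℝ) : ℝ :=
  x * Real.log x - x * Real.log (x + ((p:ℝ) + 1)) + ∑ k ∈ Finset.range (p+1), x/(x+(k:ℝ))

noncomputable def F1 (p : ℕ) (x : ℝ) : ℝ :=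
  Real.log x + 1 - (Real.log (x + ((p:ℝ) + 1)) + x/(x + ((p:ℝ) + 1)))
    + ∑ k ∈ Finset.range (p+1), (k:ℝ)/(x+(k:ℝ))^2

noncomputable def Ffun (p : ℕ) : ℕ → ℝ → ℝ
  | 0 => f0 p
  | 1 => F1 p
  | (n+2) => fun x => (-1)^n * (n ! : ℝ) * Gf p (n+1) x

lemma hasDerivAt_inv_pow (m : ℕ) {y : ℝ} (hy : y ≠ 0) :
    HasDerivAt (fun y : ℝ => 1/y^m) (-(m:ℝ)/y^(m+1)) y := by
  have h := (hasDerivAt_const y (1:ℝ)).fun_div (hasDerivAt_pow m y) (pow_ne_zero m hy)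
  convert hda h using 1
  rcases Nat.eq_zero_or_pos m with rfl | hm
  · simp
  · rw [zero_mul, one_mul, zero_sub, ← pow_mul, neg_div, neg_div, neg_inj,
      div_eq_div_iff (pow_ne_zero _ hy) (pow_ne_zero _ hy), mul_assoc, ← pow_add]
    congr 2
    omega

lemma hasDerivAt_cdiv_pow (co a : ℝ) (m : ℕ) {x : ℝ} (h : x + a ≠ 0) :
    HasDerivAt (fun x : ℝ => co/(x+a)^m) (-(co*(m:ℝ))/(x+a)^(m+1)) x := by
  have h1 := hasDerivAt_inv_pow m h
  have h2 := (h1.comp x ((hasDerivAt_id' (𝕜 := ℝ) x).add_const a)).const_mul co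
  have funeq : (fun x : ℝ => co/(x+a)^m) = (fun x : ℝ => co*(1/(x+a)^m)) := by
    funext y; rw [mul_one_div]
  rw [funeq]
  exact h2.congr_deriv (by ring)

lemma hdG (p m : ℕ) {x : ℝ} (hx : 0 < x) :
    HasDerivAt (Gf p m) (-(m:ℝ) * Gf p (m+1) x) x := by
  have hc : x + ((p:ℝ)+1) ≠ 0 := by positivity
  have hk : ∀ k : ℕ, x + (k:ℝ) ≠ 0 := fun k => by positivity
  have h1 := hasDerivAt_inv_pow m hx.ne'
  have h2 := hasDerivAt_cdiv_pow 1 ((p:ℝ)+1) m hc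
  have h3 := hasDerivAt_cdiv_pow ((m:ℝ)*((p:ℝ)+1)) ((p:ℝ)+1) (m+1) hc
  have h4 : HasDerivAt (fun x : ℝ => ∑ k ∈ Finset.range (p+1), (k:ℝ)/(x+(k:ℝ))^(m+2))
      (∑ k ∈ Finset.range (p+1), -((k:ℝ)*((m:ℝ)+2))/(x+(k:ℝ))^(m+3)) x := by
    have := HasDerivAt.fun_sum (u := Finset.range (p+1))
      (A := fun k => fun x : ℝ => (k:ℝ)/(x+(k:ℝ))^(m+2))
      (A' := fun k => -((k:ℝ)*((m:ℝ)+2))/(x+(k:ℝ))^(m+3))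
      (fun k _ => by
        have := hasDerivAt_cdiv_pow (k:ℝ) (k:ℝ) (m+2) (hk k)
        exact this.congr_deriv (by push_cast; ring))
    exact this
  have h := ((h1.fun_sub h2).fun_sub h3).fun_sub (h4.const_mul ((m:ℝ)*((m:ℝ)+1)))
  have hGf : HasDerivAt (Gf p m) (-(m:ℝ)/x^(m+1) - -(1*(m:ℝ))/(x+((p:ℝ)+1))^(m+1)
      - -((m:ℝ)*((p:ℝ)+1)*((m+1:ℕ):ℝ))/(x+((p:ℝ)+1))^(m+1+1)
      - (m:ℝ)*((m:ℝ)+1) * ∑ k ∈ Finset.range (p+1), -((k:ℝ)*((m:ℝ)+2))/(x+(k:ℝ))^(m+3)) x := h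
  convert hGf using 1
  have hs : ∑ k ∈ Finset.range (p+1), -((k:ℝ)*((m:ℝ)+2))/(x+(k:ℝ))^(m+3)
      = -(((m:ℝ)+2) * ∑ k ∈ Finset.range (p+1), (k:ℝ)/(x+(k:ℝ))^(m+3)) := by
    rw [Finset.mul_sum, ← Finset.sum_neg_distrib]
    apply Finset.sum_congr rfl
    intro k _
    ring
  rw [hs]
  unfold Gf
  simp only [show m+1+1 = m+2 from rfl, show m+1+2 = m+3 from rfl]
  push_cast
  ring

lemma hd0 (p : ℕ) {x : ℝ} (hx : 0 < x) : HasDerivAt (f0 p) (F1 p x) x := by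
  have hc : (0:ℝ) < x + ((p:ℝ)+1) := by positivity
  have hk : ∀ k : ℕ, x + (k:ℝ) ≠ 0 := fun k => by positivity
  have h1 := Real.hasDerivAt_mul_log hx.ne'
  have h2 : HasDerivAt (fun x : ℝ => x * Real.log (x + ((p:ℝ)+1)))
      (Real.log (x + ((p:ℝ)+1)) + x/(x + ((p:ℝ)+1))) x := by
    have hlog : HasDerivAt (fun x : ℝ => Real.log (x + ((p:ℝ)+1))) (1/(x+((p:ℝ)+1))) x := by
      have := (Real.hasDerivAt_log hc.ne').comp x ((hasDerivAt_id' (𝕜 := ℝ) x).add_const ((p:ℝ)+1))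
      simpa [Function.comp_def] using hda (this)
    have := (hasDerivAt_id' (𝕜 := ℝ) x).fun_mul hlog
    convert hda this using 1
    field_simp
  have h3 : HasDerivAt (fun x : ℝ => ∑ k ∈ Finset.range (p+1), x/(x+(k:ℝ)))
      (∑ k ∈ Finset.range (p+1), (k:ℝ)/(x+(k:ℝ))^2) x := by
    apply HasDerivAt.fun_sum
    intro k _
    have := (hasDerivAt_id' (𝕜 := ℝ) x).fun_div ((hasDerivAt_id' (𝕜 := ℝ) x).add_const (k:ℝ)) (hk k)
    exact this.congr_deriv (by ring)
  have h := (h1.fun_sub h2).fun_add h3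
  exact h

lemma hd1 (p : ℕ) {x : ℝ} (hx : 0 < x) : HasDerivAt (F1 p) (Gf p 1 x) x := by
  have hc : (0:ℝ) < x + ((p:ℝ)+1) := by positivity
  have hk : ∀ k : ℕ, x + (k:ℝ) ≠ 0 := fun k => by positivity
  have h1 : HasDerivAt (fun x : ℝ => Real.log x + 1) (1/x) x := by
    simpa [one_div] using (Real.hasDerivAt_log hx.ne').add_const 1
  have hlog : HasDerivAt (fun x : ℝ => Real.log (x + ((p:ℝ)+1))) (1/(x+((p:ℝ)+1))) x := by
    have := (Real.hasDerivAt_log hc.ne').comp x ((hasDerivAt_id' (𝕜 := ℝ) x).add_const ((p:ℝ)+1))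
    simpa [Function.comp_def] using hda (this)
  have hdivc : HasDerivAt (fun x : ℝ => x/(x + ((p:ℝ)+1))) (((p:ℝ)+1)/(x+((p:ℝ)+1))^2) x := by
    have := (hasDerivAt_id' (𝕜 := ℝ) x).fun_div ((hasDerivAt_id' (𝕜 := ℝ) x).add_const ((p:ℝ)+1)) hc.ne'
    convert hda this using 1
    congr 1
    ring
  have h2 := hlog.fun_add hdivc
  have h3 : HasDerivAt (fun x : ℝ => ∑ k ∈ Finset.range (p+1), (k:ℝ)/(x+(k:ℝ))^2)
      (∑ k ∈ Finset.range (p+1), -((k:ℝ)*2)/(x+(k:ℝ))^3) x := by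
    apply HasDerivAt.fun_sum
    intro k _
    simpa using hasDerivAt_cdiv_pow (k:ℝ) (k:ℝ) 2 (hk k)
  have h := (h1.fun_sub h2).fun_add h3
  refine h.congr_deriv ?_
  have hs : ∑ k ∈ Finset.range (p+1), -((k:ℝ)*2)/(x+(k:ℝ))^3
      = -(2 * ∑ k ∈ Finset.range (p+1), (k:ℝ)/(x+(k:ℝ))^3) := by
    rw [Finset.mul_sum, ← Finset.sum_neg_distrib]
    apply Finset.sum_congr rfl
    intro k _
    ring
  rw [hs]
  unfold Gf
  push_cast
  ring

lemma hdF (p : ℕ) : ∀ n : ℕ, ∀ x : ℝ, 0 < x → HasDerivAt (Ffun p n) (Ffun p (n+1) x) x := by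
  intro n
  match n with
  | 0 => intro x hx; simpa [Ffun] using hd0 p hx
  | 1 =>
    intro x hx
    have h := hd1 p hx
    simp only [Ffun]
    convert h using 1
    norm_num
  | (n+2) =>
    intro x hx
    have h := (hdG p (n+1) hx).const_mul ((-1:ℝ)^n * (n ! : ℝ))
    simp only [Ffun]
    convert hda h using 1
    rw [Nat.factorial_succ]
    push_cast
    ring

lemma iter_formula (p : ℕ) (f : ℝ → ℝ) (hf : Set.EqOn f (f0 p) (Set.Ioi 0)) :
    ∀ n : ℕ, ∀ x ∈ Set.Ioi (0:ℝ), iteratedDerivWithin n f (Set.Ioi 0) x = Ffun p n x := by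
  intro n
  induction n with
  | zero =>
    intro x hx
    simpa [Ffun] using hf hx
  | succ n ih =>
    intro x hx
    have hu : UniqueDiffWithinAt ℝ (Set.Ioi (0:ℝ)) x := isOpen_Ioi.uniqueDiffOn x hx
    rw [iteratedDerivWithin_succ,
      derivWithin_congr (fun y hy => ih y hy) (ih x hx),
      (hdF p n x hx).hasDerivWithinAt.derivWithin hu]

-- limits
lemma tendsto_const_div_add (c a : ℝ) : Tendsto (fun x : ℝ => c/(x+a)) atTop (𝓝 0) :=
  tendsto_const_nhds.div_atTop (tendsto_atTop_add_const_right _ a tendsto_id)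

lemma tendsto_const_div_add_sq (c a : ℝ) : Tendsto (fun x : ℝ => c/(x+a)^2) atTop (𝓝 0) :=
  tendsto_const_nhds.div_atTop
    ((tendsto_pow_atTop (two_ne_zero)).comp (tendsto_atTop_add_const_right _ a tendsto_id))

lemma tendsto_log_one_add_div (c : ℝ) :
    Tendsto (fun x : ℝ => Real.log (1 + c/x)) atTop (𝓝 0) := by
  have h1 : Tendsto (fun x : ℝ => 1 + c/x) atTop (𝓝 1) := by
    have := tendsto_const_nhds (x := (1:ℝ)) (f := atTop (α := ℝ))
    simpa using this.add (tendsto_const_nhds.div_atTop tendsto_id)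
  have h2 := ((Real.continuousAt_log one_ne_zero).tendsto).comp h1
  simpa [Function.comp_def] using h2

lemma F1_tendsto (p : ℕ) : Tendsto (F1 p) atTop (𝓝 0) := by
  have key : Tendsto (fun x : ℝ => -Real.log (1 + ((p:ℝ)+1)/x) + ((p:ℝ)+1)/(x+((p:ℝ)+1))
      + ∑ k ∈ Finset.range (p+1), (k:ℝ)/(x+(k:ℝ))^2) atTop (𝓝 0) := by
    have h := ((tendsto_log_one_add_div ((p:ℝ)+1)).neg.add
      (tendsto_const_div_add ((p:ℝ)+1) ((p:ℝ)+1))).add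
      (tendsto_finset_sum (Finset.range (p+1)) (fun k _ => tendsto_const_div_add_sq (k:ℝ) (k:ℝ)))
    simpa using h
  apply key.congr'
  filter_upwards [eventually_gt_atTop (0:ℝ)] with x hx
  have hc : (0:ℝ) < x + ((p:ℝ)+1) := by positivity
  have hlog : Real.log (1 + ((p:ℝ)+1)/x) = Real.log (x+((p:ℝ)+1)) - Real.log x := by
    rw [show 1 + ((p:ℝ)+1)/x = (x+((p:ℝ)+1))/x by field_simp, Real.log_div hc.ne' hx.ne']
  unfold F1
  rw [hlog]
  have : ((p:ℝ)+1)/(x+((p:ℝ)+1)) = 1 - x/(x+((p:ℝ)+1)) := by field_simp; ring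
  rw [this]
  ring

lemma f0_tendsto (p : ℕ) : Tendsto (f0 p) atTop (𝓝 0) := by
  have key : Tendsto (fun x : ℝ => -(x * Real.log (1 + ((p:ℝ)+1)/x))
      + ∑ k ∈ Finset.range (p+1), (1 - (k:ℝ)/(x+(k:ℝ)))) atTop (𝓝 0) := by
    have h := (Real.tendsto_mul_log_one_add_div_atTop ((p:ℝ)+1)).neg.add
      (tendsto_finset_sum (Finset.range (p+1))
        (fun k _ => (tendsto_const_nhds (x := (1:ℝ))).sub (tendsto_const_div_add (k:ℝ) (k:ℝ))))
    have h0 : -((p:ℝ)+1) + ∑ k ∈ Finset.range (p+1), ((1:ℝ) - 0) = 0 := by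
      simp only [sub_zero, Finset.sum_const, Finset.card_range, nsmul_eq_mul, mul_one]
      push_cast
      ring
    rw [← h0]
    exact h
  apply key.congr'
  filter_upwards [eventually_gt_atTop (0:ℝ)] with x hx
  have hc : (0:ℝ) < x + ((p:ℝ)+1) := by positivity
  have hlog : Real.log (1 + ((p:ℝ)+1)/x) = Real.log (x+((p:ℝ)+1)) - Real.log x := by
    rw [show 1 + ((p:ℝ)+1)/x = (x+((p:ℝ)+1))/x by field_simp, Real.log_div hc.ne' hx.ne']
  unfold f0
  rw [hlog]
  have hsum : ∑ k ∈ Finset.range (p+1), (1 - (k:ℝ)/(x+(k:ℝ)))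
      = ∑ k ∈ Finset.range (p+1), x/(x+(k:ℝ)) := by
    apply Finset.sum_congr rfl
    intro k _
    have hk : x + (k:ℝ) ≠ 0 := by positivity
    field_simp
    ring
  rw [hsum]
  ring

lemma F1_nonpos (p : ℕ) {x : ℝ} (hx : 0 < x) : F1 p x ≤ 0 := by
  have hmono : MonotoneOn (F1 p) (Set.Ioi 0) := by
    apply monotoneOn_of_deriv_nonneg (convex_Ioi 0)
      (fun y hy => (hd1 p hy).continuousAt.continuousWithinAt)
    · intro y hy
      rw [interior_Ioi] at hy
      exact (hd1 p hy).differentiableAt.differentiableWithinAt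
    · intro y hy
      rw [interior_Ioi] at hy
      rw [(hd1 p hy).deriv]
      exact G_nonneg p 0 hy
  apply ge_of_tendsto (F1_tendsto p)
  filter_upwards [eventually_ge_atTop x, eventually_gt_atTop (0:ℝ)] with y h1 h2
  exact hmono hx h2 h1

lemma f0_nonneg (p : ℕ) {x : ℝ} (hx : 0 < x) : 0 ≤ f0 p x := by
  have hmono : AntitoneOn (f0 p) (Set.Ioi 0) := by
    apply antitoneOn_of_deriv_nonpos (convex_Ioi 0)
      (fun y hy => (hd0 p hy).continuousAt.continuousWithinAt)
    · intro y hy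
      rw [interior_Ioi] at hy
      exact (hd0 p hy).differentiableAt.differentiableWithinAt
    · intro y hy
      rw [interior_Ioi] at hy
      rw [(hd0 p hy).deriv]
      exact F1_nonpos p hy
  apply le_of_tendsto (f0_tendsto p)
  filter_upwards [eventually_ge_atTop x, eventually_gt_atTop (0:ℝ)] with y h1 h2
  exact hmono hx h2 h1

lemma sign_F (p n : ℕ) {x : ℝ} (hx : 0 < x) : 0 ≤ (-1:ℝ)^n * Ffun p n x := by
  match n with
  | 0 => simpa [Ffun] using f0_nonneg p hx
  | 1 =>
    simp only [Ffun, pow_one, neg_one_mul, neg_nonneg]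
    exact F1_nonpos p hx
  | (n+2) =>
    simp only [Ffun]
    have hpow : (-1:ℝ)^(n+2) * ((-1)^n * (n ! : ℝ) * Gf p (n+1) x)
        = (n ! : ℝ) * Gf p (n+1) x := by
      rw [← mul_assoc, ← mul_assoc, ← pow_add, show n+2+n = 2*(n+1) by ring, pow_mul]
      norm_num
    rw [hpow]
    exact mul_nonneg (by positivity) (G_nonneg p n hx)



lemma f_eq (p : ℕ) (hp : 1 ≤ p) :
    Set.EqOn (fun x : ℝ => x * (Real.log ((p : ℝ) * x / (x + p + 1)) - pPsi p x))
      (f0 p) (Set.Ioi 0) := by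
  intro x hx
  simp only [Set.mem_Ioi] at hx
  have hp0 : (0:ℝ) < p := by exact_mod_cast hp
  have hc : (0:ℝ) < x + (p:ℝ) + 1 := by positivity
  have hlog : Real.log ((p : ℝ) * x / (x + p + 1))
      = Real.log p + Real.log x - Real.log (x + (p:ℝ) + 1) := by
    rw [Real.log_div (by positivity) hc.ne', Real.log_mul hp0.ne' hx.ne']
  simp only []
  rw [hlog]
  unfold pPsi f0
  rw [show x + ((p:ℝ)+1) = x + (p:ℝ) + 1 by ring]
  have hps : x * (Real.log p - ∑ k ∈ Finset.range (p+1), 1/(x+(k:ℝ)))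
      = x * Real.log p - ∑ k ∈ Finset.range (p+1), x/(x+(k:ℝ)) := by
    rw [mul_sub, Finset.mul_sum]
    congr 1
    apply Finset.sum_congr rfl
    intro k _
    rw [mul_one_div]
  linear_combination -hps

lemma f0_contDiffOn (p : ℕ) : ContDiffOn ℝ (⊤ : ℕ∞) (f0 p) (Set.Ioi 0) := by
  have hsub : Set.Ioi (0:ℝ) ⊆ {0}ᶜ := fun y hy => by
    simp only [Set.mem_compl_iff, Set.mem_singleton_iff]
    exact (Set.mem_Ioi.mp hy).ne'
  have h1 : ContDiffOn ℝ (⊤ : ℕ∞) (fun x : ℝ => x * Real.log x) (Set.Ioi 0) :=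
    contDiff_id.contDiffOn.mul (Real.contDiffOn_log.mono hsub)
  have h2 : ContDiffOn ℝ (⊤ : ℕ∞) (fun x : ℝ => x * Real.log (x + ((p:ℝ)+1))) (Set.Ioi 0) := by
    apply contDiff_id.contDiffOn.mul
    apply Real.contDiffOn_log.comp ((contDiff_id.add contDiff_const).contDiffOn)
    intro y hy
    simp only [Set.mem_compl_iff, Set.mem_singleton_iff]
    have : (0:ℝ) < y := hy
    positivity
  have h3 : ContDiffOn ℝ (⊤ : ℕ∞) (fun x : ℝ => ∑ k ∈ Finset.range (p+1), x/(x+(k:ℝ)))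
      (Set.Ioi 0) := by
    apply ContDiffOn.sum
    intro k _
    apply contDiff_id.contDiffOn.div ((contDiff_id.add contDiff_const).contDiffOn)
    intro y hy
    have : (0:ℝ) < y := hy
    positivity
  refine ((h1.sub h2).add h3).congr ?_
  intro y hy
  unfold f0
  ring

end ThetaAux

theorem theta_p_one_completelyMonotonic (p : ℕ) (hp : 1 ≤ p) :
    CompletelyMonotonicOn
      (fun x => x * (Real.log ((p : ℝ) * x / (x + p + 1)) - pPsi p x)) := by
  constructor
  · exact (ThetaAux.f0_contDiffOn p).congr (ThetaAux.f_eq p hp)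
  · intro n x hx
    rw [ThetaAux.iter_formula p _ (ThetaAux.f_eq p hp) n x hx]
    exact ThetaAux.sign_F p n (Set.mem_Ioi.mp hx)
end

section
/- For each positive integer p, if α is a real number such that θ_{p,α}(x) = x^α [ln(px/(x+p+1)) − ψ_p(x)] is completely monotonic on (0, ∞), then α ≤ 1. -/
open Real Finset

theorem theta_p_alpha_necessary (p : ℕ) (hp : 1 ≤ p) (α : ℝ)
    (h : CompletelyMonotonicOn
      (fun x => x ^ α * (Real.log ((p : ℝ) * x / (x + p + 1)) - pPsi p x))) :
    α ≤ 1 := by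
  by_contra hcon
  push_neg at hcon
  have hp0 : (0:ℝ) < p := by exact_mod_cast Nat.lt_of_lt_of_le Nat.zero_lt_one hp
  set f : ℝ → ℝ := fun x => x ^ α * (Real.log ((p : ℝ) * x / (x + p + 1)) - pPsi p x) with hfdef
  set G : ℝ → ℝ := fun x => Real.log x - Real.log (x + p + 1)
      + ∑ k ∈ Finset.range (p+1), 1/(x + (k:ℝ)) with hGdef
  set G' : ℝ → ℝ := fun x => 1/x - 1/(x + p + 1)
      - ∑ k ∈ Finset.range (p+1), 1/(x + (k:ℝ))^2 with hG'def
  clear_value G' G f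
  -- f agrees with x^α * G x on Ioi 0
  have hfeq : Set.EqOn f (fun x => x ^ α * G x) (Set.Ioi 0) := by
    intro x hx
    simp only [Set.mem_Ioi] at hx
    have h1 : (p:ℝ) * x ≠ 0 := by positivity
    have h2 : x + (p:ℝ) + 1 ≠ 0 := by positivity
    simp only [hfdef, hGdef, pPsi]
    rw [Real.log_div h1 h2, Real.log_mul (by positivity) hx.ne']
    ring
  -- derivative of G
  have hGderiv : ∀ x : ℝ, 0 < x → HasDerivAt G (G' x) x := by
    intro x hx
    have h1 : HasDerivAt Real.log x⁻¹ x := Real.hasDerivAt_log hx.ne'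
    have h2 : HasDerivAt (fun y : ℝ => y + (p:ℝ) + 1) 1 x :=
      ((hasDerivAt_id x).add_const (p:ℝ)).add_const 1
    have h3 : HasDerivAt (fun y : ℝ => Real.log (y + (p:ℝ) + 1)) (1 / (x + p + 1)) x :=
      h2.log (by positivity)
    have h4 : HasDerivAt (fun y : ℝ => ∑ k ∈ Finset.range (p+1), 1/(y + (k:ℝ)))
        (∑ k ∈ Finset.range (p+1), -(1/(x + (k:ℝ))^2)) x := by
      apply HasDerivAt.fun_sum
      intro k _
      have hk : x + (k:ℝ) ≠ 0 := by positivity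
      have := (((hasDerivAt_id x).add_const ((k:ℝ))).inv hk)
      simpa [one_div, neg_div, Pi.inv_def] using this
    have := ((h1.sub h3).add h4)
    rw [hGdef]
    refine this.congr_deriv ?_
    simp only [hG'def, Finset.sum_neg_distrib, one_div]
    ring
  -- key inequality from complete monotonicity
  have key : ∀ x : ℝ, 0 < x → α * G x + x * G' x ≤ 0 := by
    intro x hx
    have hxmem : x ∈ Set.Ioi (0:ℝ) := hx
    have hd1 : HasDerivAt (fun y : ℝ => y ^ α * G y)
        (α * x ^ (α - 1) * G x + x ^ α * G' x) x := by
      have hr : HasDerivAt (fun y : ℝ => y ^ α) (α * x ^ (α - 1)) x :=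
        Real.hasDerivAt_rpow_const (Or.inl hx.ne')
      exact hr.mul (hGderiv x hx)
    have hfd : HasDerivAt f (α * x ^ (α - 1) * G x + x ^ α * G' x) x := by
      apply hd1.congr_of_eventuallyEq
      exact Filter.eventuallyEq_of_mem (isOpen_Ioi.mem_nhds hxmem) hfeq
    have hle : iteratedDerivWithin 1 f (Set.Ioi 0) x ≤ 0 := by
      have := h.2 1 x hxmem
      simpa using this
    rw [iteratedDerivWithin_one,
      derivWithin_of_isOpen isOpen_Ioi hxmem, hfd.deriv] at hle
    have hxa : x ^ α = x ^ (α - 1) * x := by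
      rw [← Real.rpow_add_one hx.ne' (α - 1)]; ring_nf
    rw [hxa] at hle
    have hpow : (0:ℝ) < x ^ (α - 1) := Real.rpow_pos_of_pos hx _
    nlinarith [hle, hpow]
  -- now pick a small point to contradict
  set A := α - 1 with hAdef
  clear_value A
  have hA : 0 < A := by rw [hAdef]; linarith
  set t : ℝ := 4 * ((p:ℝ) + 2) * α / A + 1 with htdef
  clear_value t
  have hα0 : (0:ℝ) < α := by linarith
  have htA : A * t = 4 * ((p:ℝ) + 2) * α + A := by
    rw [htdef]; field_simp
  have ht0 : 0 < t := by
    have : 0 < 4 * ((p:ℝ) + 2) * α / A := by positivity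
    linarith
  set x0 : ℝ := ((p:ℝ) + 2) * Real.exp (-t) with hx0def
  clear_value x0
  have hx0 : 0 < x0 := by rw [hx0def]; positivity
  have hexpt : Real.exp t ≥ (t/2 + 1)^2 := by
    have h1 : t/2 + 1 ≤ Real.exp (t/2) := Real.add_one_le_exp (t/2)
    have h2 : (0:ℝ) ≤ t/2 + 1 := by linarith
    calc (t/2+1)^2 ≤ Real.exp (t/2) ^ 2 := pow_le_pow_left₀ h2 h1 2
    _ = Real.exp t := by rw [sq, ← Real.exp_add]; congr 1; ring
  have hx01 : x0 ≤ 1 := by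
    have h1 : (p:ℝ) + 2 ≤ Real.exp t := by
      have ht4 : 4 * ((p:ℝ) + 2) < t := by
        have : (p:ℝ) + 2 ≤ ((p:ℝ)+2) * (α / A) := by
          have : 1 ≤ α / A := by
            rw [le_div_iff₀ hA]; linarith
          nlinarith
        have h4 : 4 * ((p:ℝ)+2) * α / A = 4 * (((p:ℝ)+2) * (α/A)) := by ring
        rw [htdef, h4]
        nlinarith
      nlinarith [Real.add_one_le_exp t]
    rw [hx0def, Real.exp_neg, ← div_eq_mul_inv, div_le_one (Real.exp_pos t)]
    exact h1
  have hlogx0 : Real.log x0 = Real.log ((p:ℝ)+2) - t := by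
    rw [hx0def, Real.log_mul (by positivity) (Real.exp_ne_zero _), Real.log_exp]
    ring
  have hinvx0 : 1 / x0 = Real.exp t / ((p:ℝ)+2) := by
    rw [hx0def, Real.exp_neg]
    field_simp
  -- bound the sum terms
  have hS1 : 1/x0 ≤ ∑ k ∈ Finset.range (p+1), 1/(x0 + (k:ℝ)) := by
    have h0 : (0:ℕ) ∈ Finset.range (p+1) := by simp
    have := Finset.single_le_sum (f := fun k : ℕ => 1/(x0 + (k:ℝ)))
      (fun k _ => by positivity) h0
    simpa using this
  have hS2 : x0 * (∑ k ∈ Finset.range (p+1), 1/(x0 + (k:ℝ))^2)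
      ≤ ∑ k ∈ Finset.range (p+1), 1/(x0 + (k:ℝ)) := by
    rw [Finset.mul_sum]
    apply Finset.sum_le_sum
    intro k _
    have hk0 : (0:ℝ) ≤ (k:ℝ) := Nat.cast_nonneg k
    have hxk : (0:ℝ) < x0 + k := by positivity
    rw [mul_one_div, div_le_div_iff₀ (by positivity) hxk]
    nlinarith
  have hlog2 : Real.log (x0 + (p:ℝ) + 1) ≤ Real.log ((p:ℝ)+2) := by
    apply Real.log_le_log (by positivity)
    linarith
  have hfrac : x0 / (x0 + (p:ℝ) + 1) ≤ 1 := by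
    rw [div_le_one (by positivity)]; linarith
  -- contradiction
  have hkey := key x0 hx0
  have hGlb : 1/x0 + Real.log x0 - Real.log ((p:ℝ)+2) ≤ G x0 := by
    simp only [hGdef]
    linarith [hS1, hlog2]
  have hGx' : Real.log x0 - Real.log ((p:ℝ)+2) ≤ G x0 + x0 * G' x0 := by
    simp only [hGdef, hG'def]
    have h1 : x0 * (1/x0) = 1 := by field_simp
    have e1 : x0 * (1/x0 - 1/(x0 + (p:ℝ) + 1) - ∑ k ∈ Finset.range (p+1), 1/(x0 + (k:ℝ))^2)
        = 1 - x0/(x0+(p:ℝ)+1) - x0 * ∑ k ∈ Finset.range (p+1), 1/(x0 + (k:ℝ))^2 := by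
      rw [mul_sub, mul_sub, h1, mul_one_div]
    rw [e1]
    linarith [hS2, hlog2, hfrac]
  have hsplit : α * G x0 + x0 * G' x0 = A * G x0 + (G x0 + x0 * G' x0) := by
    rw [hAdef]; ring
  have hfinal : A / x0 + α * (Real.log x0 - Real.log ((p:ℝ)+2)) ≤ α * G x0 + x0 * G' x0 := by
    rw [hsplit]
    have h1 : A * (1/x0 + Real.log x0 - Real.log ((p:ℝ)+2)) ≤ A * G x0 :=
      mul_le_mul_of_nonneg_left hGlb hA.le
    have e : A * (1/x0 + Real.log x0 - Real.log ((p:ℝ)+2))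
        = A/x0 + A*(Real.log x0 - Real.log ((p:ℝ)+2)) := by ring
    have eα : α*(Real.log x0 - Real.log ((p:ℝ)+2))
        = A*(Real.log x0 - Real.log ((p:ℝ)+2)) + (Real.log x0 - Real.log ((p:ℝ)+2)) := by
      rw [hAdef]; ring
    linarith [h1, hGx']
  have hgt : 0 < A / x0 + α * (Real.log x0 - Real.log ((p:ℝ)+2)) := by
    have eL : Real.log x0 - Real.log ((p:ℝ)+2) = -t := by rw [hlogx0]; ring
    rw [eL]
    have eA : A / x0 = A * Real.exp t / ((p:ℝ)+2) := by
      rw [div_eq_mul_one_div, hinvx0]; ring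
    rw [eA]
    have hp2 : (0:ℝ) < (p:ℝ)+2 := by positivity
    have hlt : α * t < A * Real.exp t / ((p:ℝ)+2) := by
      rw [lt_div_iff₀ hp2]
      have hAexp : A*((t/2+1)^2) ≤ A*Real.exp t := mul_le_mul_of_nonneg_left hexpt hA.le
      have e2 : A*((t/2+1)^2) = A*t*t/4 + A*t + A := by ring
      have h5 : A*t*t = (4*((p:ℝ)+2)*α + A)*t := by rw [htA]
      have h6 : 0 < A*t := mul_pos hA ht0
      linarith [hAexp, e2, h5, h6, hA]
    linarith
  linarith [hkey, hfinal, hgt]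
end

section
/- For each positive integer p and every x > 0, ψ_p(x) < ln(px/(x+p+1)), i.e., ln(px/(x+p+1)) − ψ_p(x) > 0. -/
open Real Finset

/-! Each term `1/(x+k)` of the sum strictly dominates the increment `log (x+k+1) - log (x+k)`
(strict concavity of `log`), so `∑_{k=0}^{p} 1/(x+k) > log (x+p+1) - log x`; subtracting this
from `log p` gives the claim. -/

lemma log_add_one_sub_log_lt_inv {y : ℝ} (hy : 0 < y) : log (y + 1) - log y < 1 / y := by
  have hquot : 0 < (y + 1) / y := by positivity
  have hne : (y + 1) / y ≠ 1 := by
    rw [Ne, div_eq_one_iff_eq hy.ne']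
    linarith
  calc log (y + 1) - log y = log ((y + 1) / y) := (log_div (by positivity) hy.ne').symm
    _ < (y + 1) / y - 1 := log_lt_sub_one_of_pos hquot hne
    _ = 1 / y := by field_simp; ring

lemma log_add_sub_log_lt_sum_inv {x : ℝ} (hx : 0 < x) {n : ℕ} (hn : 0 < n) :
    log (x + n) - log x < ∑ k ∈ range n, 1 / (x + k) := by
  have htelescope : ∑ k ∈ range n, (log (x + (k + 1 : ℕ)) - log (x + k)) = log (x + n) - log x := by
    rw [sum_range_sub (fun k => log (x + k))]
    simp
  rw [← htelescope]
  refine sum_lt_sum_of_nonempty (nonempty_range_iff.mpr hn.ne') fun k _ => ?_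
  have hxk : 0 < x + k := by positivity
  simpa [add_assoc] using log_add_one_sub_log_lt_inv hxk

theorem pPsi_lt_log (p : ℕ) (hp : 1 ≤ p) (x : ℝ) (hx : 0 < x) :
    pPsi p x < Real.log ((p : ℝ) * x / (x + p + 1)) := by
  have hp0 : (0 : ℝ) < p := by exact_mod_cast hp
  have hlog : log ((p : ℝ) * x / (x + p + 1)) = log p - (log (x + p + 1) - log x) := by
    rw [log_div (by positivity) (by positivity), log_mul hp0.ne' hx.ne']
    ring
  have hsum := log_add_sub_log_lt_sum_inv hx (Nat.succ_pos p)
  rw [Nat.cast_succ, ← add_assoc] at hsum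
  rw [pPsi, hlog]
  linarith
end

section
/- For each positive integer p and all t > 0, the function (1 − e^{−(p+1)t}) φ'(t) + (p+1) e^{−(p+1)t} φ(t) is positive, where φ(t) = 1/(1 − e^{−t}) − 1/t. -/
open Real

noncomputable def phi (t : ℝ) : ℝ := 1 / (1 - Real.exp (-t)) - 1 / t

lemma one_sub_exp_neg_lt {t : ℝ} (ht : 0 < t) : 1 - exp (-t) < t := by
  linarith [add_one_lt_exp (neg_ne_zero.mpr ht.ne')]

lemma mul_exp_neg_half_lt_one_sub_exp_neg {t : ℝ} (ht : 0 < t) :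
    t * exp (-(t / 2)) < 1 - exp (-t) := by
  have hsinh : t < 2 * sinh (t / 2) := by linarith [self_lt_sinh_iff.mpr (half_pos ht)]
  have hfactor : 1 - exp (-t) = 2 * sinh (t / 2) * exp (-(t / 2)) := by
    have hinv : exp (t / 2) * exp (-(t / 2)) = 1 := by rw [← exp_add, add_neg_cancel, exp_zero]
    rw [sinh_eq, show -t = -(t / 2) + -(t / 2) by ring, exp_add]
    linear_combination -hinv
  rw [hfactor]
  exact mul_lt_mul_of_pos_right hsinh (exp_pos _)

lemma sq_mul_exp_neg_lt_one_sub_exp_neg_sq {t : ℝ} (ht : 0 < t) :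
    t ^ 2 * exp (-t) < (1 - exp (-t)) ^ 2 := by
  have hsq : exp (-(t / 2)) ^ 2 = exp (-t) := by
    rw [← exp_nat_mul]; ring_nf
  calc t ^ 2 * exp (-t) = (t * exp (-(t / 2))) ^ 2 := by rw [mul_pow, hsq]
    _ < (1 - exp (-t)) ^ 2 := by
      gcongr
      exact mul_exp_neg_half_lt_one_sub_exp_neg ht

lemma phi_pos {t : ℝ} (ht : 0 < t) : 0 < phi t := by
  unfold phi
  linarith [one_div_lt_one_div_of_lt (one_sub_exp_neg_pos ht) (one_sub_exp_neg_lt ht)]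

lemma hasDerivAt_phi {t : ℝ} (ht : 0 < t) :
    HasDerivAt phi (1 / t ^ 2 - exp (-t) / (1 - exp (-t)) ^ 2) t := by
  have hden : HasDerivAt (fun s => 1 - exp (-s)) (exp (-t)) t := by
    simpa using ((hasDerivAt_neg t).exp).const_sub 1
  have h := (hden.inv (one_sub_exp_neg_pos ht).ne').sub ((hasDerivAt_id t).inv ht.ne')
  have hphi : phi = (fun s => 1 - exp (-s))⁻¹ - id⁻¹ := by
    funext s; simp only [phi, Pi.sub_apply, Pi.inv_apply, id, one_div]
  rw [hphi]
  exact h.congr_deriv (by simp only [id]; ring)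

lemma deriv_phi_pos {t : ℝ} (ht : 0 < t) : 0 < deriv phi t := by
  rw [(hasDerivAt_phi ht).deriv, sub_pos,
    div_lt_div_iff₀ (pow_pos (one_sub_exp_neg_pos ht) 2) (pow_pos ht 2)]
  linarith [sq_mul_exp_neg_lt_one_sub_exp_neg_sq ht]

theorem phi_expression_pos_general (p : ℕ) (t : ℝ) (ht : 0 < t) :
    0 < (1 - Real.exp (-((p : ℝ) + 1) * t)) * deriv phi t
        + ((p : ℝ) + 1) * Real.exp (-((p : ℝ) + 1) * t) * phi t := by
  have hcoeff : 0 < 1 - exp (-((p : ℝ) + 1) * t) := by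
    rw [neg_mul]; exact one_sub_exp_neg_pos (by positivity : 0 < ((p : ℝ) + 1) * t)
  have hderiv := deriv_phi_pos ht
  have hphi := phi_pos ht
  positivity

theorem phi_expression_pos (p : ℕ) (hp : 1 ≤ p) (t : ℝ) (ht : 0 < t) :
    0 < (1 - Real.exp (-((p : ℝ) + 1) * t)) * deriv phi t
        + ((p : ℝ) + 1) * Real.exp (-((p : ℝ) + 1) * t) * phi t :=
  phi_expression_pos_general p t ht
end
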